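/- arXiv:math/9810201 — 3 statements merged into one kernel-verified Lean document; each statement's English description precedes it below -/
import Mathlib

section
/- If J is a finite index subgroup of a finitely generated group G and J admits an asynchronous combing, then G admits an asynchronous combing. -/
section Combings

variable {G : Type*} [Group G]

/-- `S` is a finite, symmetric (inverse-closed) generating set of `G`;
it plays the role of `X ∪ X⁻¹` for a finite generating set `X`. -/
def IsSymmGenSet (S : Set G) : Prop :=
  S.Finite ∧ (∀ x ∈ S, x⁻¹ ∈ S) ∧ Subgroup.closure S = ⊤

/-- The word metric on `G` with respect to the generating set `S`:
the least length of a word over `S` representing `g⁻¹ * h`. -/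
noncomputable def wordDist (S : Set G) (g h : G) : ℕ :=
  sInf {n | ∃ w : List G, (∀ x ∈ w, x ∈ S) ∧ w.length = n ∧ w.prod = g⁻¹ * h}

/-- The point reached at (integer) time `t` along the path in the Cayley graph
starting at the identity and labelled by the word `w`; for `t ≥ |w|` the path
stays at its endpoint. -/
def pathAt (w : List G) (t : ℕ) : G := (w.take t).prod

/-- The paths labelled by `v` and `w` synchronously `K`-fellow travel:
at each time `t` the corresponding points are at distance at most `K`. -/
def SyncFellow (S : Set G) (K : ℕ) (v w : List G) : Prop :=
  ∀ t : ℕ, wordDist S (pathAt v t) (pathAt w t) ≤ K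

/-- The paths labelled by `v` and `w` asynchronously `K`-fellow travel:
there is a monotone unit-speed-bounded reparametrisation `h` of the second path,
starting at `0` and eventually traversing all of `w`, keeping corresponding
points at distance at most `K`. -/
def AsyncFellow (S : Set G) (K : ℕ) (v w : List G) : Prop :=
  ∃ h : ℕ → ℕ, Monotone h ∧ h 0 = 0 ∧ (∀ t, h (t + 1) ≤ h t + 1) ∧
    (∃ T : ℕ, ∀ t, T ≤ t → w.length ≤ h t) ∧
    ∀ t : ℕ, wordDist S (pathAt v t) (pathAt w (h t)) ≤ K

/-- `L` is a language for `G` over `S`: a set of words over `S` that maps onto `G`. -/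
def IsLanguageFor (S : Set G) (L : Set (List G)) : Prop :=
  (∀ w ∈ L, ∀ x ∈ w, x ∈ S) ∧ ∀ g : G, ∃ w ∈ L, w.prod = g

/-- Two words represent group elements that are equal or differ by right
multiplication by a generator from `S`. -/
def GenRelated (S : Set G) (v w : List G) : Prop :=
  v.prod = w.prod ∨ ∃ x ∈ S, w.prod = v.prod * x

/-- `L` is an asynchronous combing for `G` over `S`. -/
def IsAsyncCombing (S : Set G) (L : Set (List G)) : Prop :=
  IsLanguageFor S L ∧ ∃ K : ℕ, ∀ v ∈ L, ∀ w ∈ L, GenRelated S v w → AsyncFellow S K v w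

/-- `L` is a synchronous combing for `G` over `S`. -/
def IsSyncCombing (S : Set G) (L : Set (List G)) : Prop :=
  IsLanguageFor S L ∧ ∃ K : ℕ, ∀ v ∈ L, ∀ w ∈ L, GenRelated S v w → SyncFellow S K v w

/-- `G` admits an asynchronous combing (it is asynchronously combable). -/
def AsyncCombable (G : Type*) [Group G] : Prop :=
  ∃ (S : Set G) (L : Set (List G)), IsSymmGenSet S ∧ IsAsyncCombing S L

end Combings

/-!
Choose a finite right transversal `T` of `J`, so that every `g : G` is `j * t` with `j ∈ J` and
`t ∈ T`, and comb `g` by a combing word of `j` followed by the letter `t`. If two such words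
`v ++ [s]` and `w ++ [t]` end at points differing by a generator `x`, then the `J`-elements
represented by `v` and `w` differ by `s * x * t⁻¹`, one of finitely many elements of `J`, so they
are at bounded distance in `J`. Chaining the combing of `J` along a geodesic between them makes
`v` and `w` fellow travel with a uniform constant, and the last letters cost one more step each.

Asynchronous fellow travelling is not visibly transitive (a reparametrisation may stall after
its source path has ended), so the chaining is done with reparametrisations of bounded lag, which
compose, and into which every asynchronous reparametrisation can be modified.
-/

open scoped Pointwise

section WordMetric

variable {G : Type*} [Group G] {S : Set G}

lemma wordDist_le_length {g h : G} {w : List G} (hw : ∀ x ∈ w, x ∈ S)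
    (hp : w.prod = g⁻¹ * h) : wordDist S g h ≤ w.length :=
  Nat.sInf_le ⟨w, hw, rfl, hp⟩

lemma wordDist_one_inv_mul (g h : G) : wordDist S 1 (g⁻¹ * h) = wordDist S g h := by
  simp only [wordDist, inv_one, one_mul]

lemma exists_length_eq_wordDist (hS : Submonoid.closure S = ⊤) (g h : G) :
    ∃ w : List G, (∀ x ∈ w, x ∈ S) ∧ w.length = wordDist S g h ∧
      w.prod = g⁻¹ * h := by
  obtain ⟨w, hw, hp⟩ :=
    Submonoid.exists_list_of_mem_closure (hS ▸ Submonoid.mem_top (g⁻¹ * h))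
  show wordDist S g h ∈
    {n | ∃ w : List G, (∀ x ∈ w, x ∈ S) ∧ w.length = n ∧ w.prod = g⁻¹ * h}
  exact Nat.sInf_mem ⟨w.length, w, hw, rfl, hp⟩

lemma IsSymmGenSet.submonoid_closure_eq_top (hS : IsSymmGenSet S) : Submonoid.closure S = ⊤ := by
  obtain ⟨-, hsymm, hgen⟩ := hS
  have hinv : S⁻¹ ⊆ S := fun x hx => by simpa using hsymm _ hx
  rw [← Set.union_eq_left.mpr hinv, ← Subgroup.closure_toSubmonoid, hgen,
    Subgroup.top_toSubmonoid]

lemma wordDist_triangle (hS : Submonoid.closure S = ⊤) (a b c : G) :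
    wordDist S a c ≤ wordDist S a b + wordDist S b c := by
  obtain ⟨u, hu, hul, hup⟩ := exists_length_eq_wordDist hS a b
  obtain ⟨w, hw, hwl, hwp⟩ := exists_length_eq_wordDist hS b c
  calc wordDist S a c ≤ (u ++ w).length :=
        wordDist_le_length (List.forall_mem_append.mpr ⟨hu, hw⟩)
          (by rw [List.prod_append, hup, hwp]; group)
    _ = wordDist S a b + wordDist S b c := by rw [List.length_append, hul, hwl]

lemma wordDist_swap_le (hsymm : ∀ x ∈ S, x⁻¹ ∈ S) (hS : Submonoid.closure S = ⊤)
    (g h : G) : wordDist S h g ≤ wordDist S g h := by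
  obtain ⟨w, hw, hl, hp⟩ := exists_length_eq_wordDist hS g h
  calc wordDist S h g ≤ (w.map (·⁻¹)).reverse.length :=
        wordDist_le_length
          (by
            simp only [List.mem_reverse, List.mem_map]
            rintro _ ⟨x, hx, rfl⟩
            exact hsymm x (hw x hx))
          (by rw [← List.prod_inv_reverse, hp]; group)
    _ = wordDist S g h := by rw [List.length_reverse, List.length_map, hl]

lemma wordDist_comm (hsymm : ∀ x ∈ S, x⁻¹ ∈ S) (hS : Submonoid.closure S = ⊤) (g h : G) :
    wordDist S g h = wordDist S h g :=
  le_antisymm (wordDist_swap_le hsymm hS h g) (wordDist_swap_le hsymm hS g h)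

lemma wordDist_map_le {H : Type*} [Group H] {S' : Set H} (hS' : Submonoid.closure S' = ⊤)
    (f : H →* G) (hf : Set.MapsTo f S' S) (a b : H) :
    wordDist S (f a) (f b) ≤ wordDist S' a b := by
  obtain ⟨w, hw, hl, hp⟩ := exists_length_eq_wordDist hS' a b
  calc wordDist S (f a) (f b) ≤ (w.map f).length :=
        wordDist_le_length (by simpa using fun x hx => hf (hw x hx))
          (by rw [List.prod_hom, hp, map_mul, map_inv])
    _ = wordDist S' a b := by rw [List.length_map, hl]

end WordMetric

section Paths

variable {G : Type*} [Group G]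

lemma pathAt_of_length_le {w : List G} {t : ℕ} (h : w.length ≤ t) : pathAt w t = w.prod := by
  rw [pathAt, List.take_of_length_le h]

lemma pathAt_append (v u : List G) (t : ℕ) :
    pathAt (v ++ u) t = pathAt v t * pathAt u (t - v.length) := by
  rw [pathAt, pathAt, pathAt, List.take_append, List.prod_append]

lemma pathAt_map {H : Type*} [Group H] (f : H →* G) (w : List H) (t : ℕ) :
    pathAt (w.map f) t = f (pathAt w t) := by
  rw [pathAt, pathAt, ← List.map_take, List.prod_hom]

end Paths

section FellowTravel

variable {G : Type*} [Group G] {S : Set G} {K : ℕ} {v w : List G}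

lemma syncFellow_append {u : List G} (hu : ∀ x ∈ u, x ∈ S) (v : List G) :
    SyncFellow S u.length v (v ++ u) := fun t => by
  rw [pathAt_append]
  calc _ ≤ (u.take (t - v.length)).length :=
        wordDist_le_length (fun x hx => hu x (List.mem_of_mem_take hx))
          (by rw [inv_mul_cancel_left]; rfl)
    _ ≤ u.length := List.length_take_le' _ _

lemma SyncFellow.symm (hsymm : ∀ x ∈ S, x⁻¹ ∈ S) (hS : Submonoid.closure S = ⊤)
    (h : SyncFellow S K v w) : SyncFellow S K w v :=
  fun t => wordDist_comm hsymm hS (pathAt w t) (pathAt v t) ▸ h t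

def BoundedLagFellow (S : Set G) (K : ℕ) (v w : List G) : Prop :=
  ∃ h : ℕ → ℕ, ∃ T : ℕ, Monotone h ∧ h 0 = 0 ∧ (∀ t, h (t + 1) ≤ h t + 1) ∧
    (∀ t, t - T ≤ h t) ∧ ∀ t, wordDist S (pathAt v t) (pathAt w (h t)) ≤ K

lemma SyncFellow.boundedLagFellow (h : SyncFellow S K v w) : BoundedLagFellow S K v w :=
  ⟨id, 0, monotone_id, rfl, fun _ => le_rfl, fun _ => le_rfl, h⟩

lemma BoundedLagFellow.asyncFellow (h : BoundedLagFellow S K v w) : AsyncFellow S K v w := by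
  obtain ⟨f, T, hmono, h0, hstep, hlag, hdist⟩ := h
  exact ⟨f, hmono, h0, hstep, ⟨T + w.length, fun t ht => (hlag t).trans' (by omega)⟩, hdist⟩

lemma AsyncFellow.boundedLagFellow (h : AsyncFellow S K v w) : BoundedLagFellow S K v w := by
  obtain ⟨f, hmono, h0, hstep, ⟨T, hT⟩, hdist⟩ := h
  refine ⟨fun t => max (f t) (t - T), T, fun a b hab => max_le_max (hmono hab) (by omega),
    by simp [h0], fun t => by have := hstep t; dsimp only; omega, fun t => le_max_right _ _,
    fun t => ?_⟩
  dsimp only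
  rcases le_or_gt (t - T) (f t) with hlag | hlag
  · rw [max_eq_left hlag]
    exact hdist t
  · -- `f` has already traversed `w`, so moving further along it stays at the endpoint
    have hw : w.length ≤ f t := hT t (by omega)
    rw [max_eq_right hlag.le, pathAt_of_length_le (hw.trans hlag.le), ← pathAt_of_length_le hw]
    exact hdist t

lemma BoundedLagFellow.mono {K' : ℕ} (h : BoundedLagFellow S K v w) (hK : K ≤ K') :
    BoundedLagFellow S K' v w := by
  obtain ⟨f, T, hmono, h0, hstep, hlag, hdist⟩ := h
  exact ⟨f, T, hmono, h0, hstep, hlag, fun t => (hdist t).trans hK⟩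

lemma BoundedLagFellow.trans (hS : Submonoid.closure S = ⊤) {K' : ℕ} {u : List G}
    (h₁ : BoundedLagFellow S K u v) (h₂ : BoundedLagFellow S K' v w) :
    BoundedLagFellow S (K + K') u w := by
  obtain ⟨f₁, T₁, hmono₁, h0₁, hstep₁, hlag₁, hdist₁⟩ := h₁
  obtain ⟨f₂, T₂, hmono₂, h0₂, hstep₂, hlag₂, hdist₂⟩ := h₂
  refine ⟨f₂ ∘ f₁, T₁ + T₂, hmono₂.comp hmono₁, by simp [h0₁, h0₂],
    fun t => (hmono₂ (hstep₁ t)).trans (hstep₂ _), fun t => ?_,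
    fun t => (wordDist_triangle hS _ _ _).trans (add_le_add (hdist₁ t) (hdist₂ _))⟩
  have := hlag₁ t
  have := hlag₂ (f₁ t)
  simp only [Function.comp_apply]
  omega

lemma BoundedLagFellow.map {H : Type*} [Group H] {S' : Set H} (hS' : Submonoid.closure S' = ⊤)
    (f : H →* G) (hf : Set.MapsTo f S' S) {v w : List H} (h : BoundedLagFellow S' K v w) :
    BoundedLagFellow S K (v.map f) (w.map f) := by
  obtain ⟨g, T, hmono, h0, hstep, hlag, hdist⟩ := h
  refine ⟨g, T, hmono, h0, hstep, hlag, fun t => ?_⟩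
  rw [pathAt_map, pathAt_map]
  exact (wordDist_map_le hS' f hf _ _).trans (hdist t)

end FellowTravel

section Combing

variable {G : Type*} [Group G] {S : Set G} {L : Set (List G)} {K : ℕ} {v w : List G}

lemma GenRelated.exists_mem_insert_one (h : GenRelated S v w) :
    ∃ x ∈ insert 1 S, w.prod = v.prod * x := by
  rcases h with h | ⟨x, hx, h⟩
  · exact ⟨1, Set.mem_insert _ _, by rw [h, mul_one]⟩
  · exact ⟨x, Set.mem_insert_of_mem _ hx, h⟩

variable (hS : Submonoid.closure S = ⊤) (hL : IsLanguageFor S L)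
  (hK : ∀ v ∈ L, ∀ w ∈ L, GenRelated S v w → AsyncFellow S K v w)
include hS hL hK

lemma boundedLagFellow_of_prod_eq_mul_prod {xs : List G} (hxs : ∀ x ∈ xs, x ∈ S)
    (hv : v ∈ L) (hw : w ∈ L) (hvw : w.prod = v.prod * xs.prod) :
    BoundedLagFellow S (K * (xs.length + 1)) v w := by
  induction xs generalizing v with
  | nil => simpa using (hK v hv w hw (.inl (by simpa using hvw.symm))).boundedLagFellow
  | cons x xs ih =>
    obtain ⟨u, hu, hup⟩ := hL.2 (v.prod * x)
    have hvu := (hK v hv u hu (.inr ⟨x, hxs x (.head _), hup⟩)).boundedLagFellow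
    have huw := ih (fun y hy => hxs y (.tail _ hy)) hu (by rw [hup, hvw, List.prod_cons, mul_assoc])
    rw [List.length_cons, show K * (xs.length + 1 + 1) = K + K * (xs.length + 1) by ring]
    exact hvu.trans hS huw

lemma boundedLagFellow_of_wordDist_le (hv : v ∈ L) (hw : w ∈ L) {n : ℕ}
    (hn : wordDist S v.prod w.prod ≤ n) : BoundedLagFellow S (K * (n + 1)) v w := by
  obtain ⟨xs, hxs, hl, hp⟩ := exists_length_eq_wordDist hS v.prod w.prod
  refine (boundedLagFellow_of_prod_eq_mul_prod hS hL hK hxs hv hw ?_).mono ?_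
  · rw [hp, mul_inv_cancel_left]
  · rw [hl]
    gcongr

end Combing

section Transversal

variable {G : Type*} [Group G] {J : Subgroup G} {SJ : Set J} {LJ : Set (List J)} {T : Set G}

def transversalGenSet (J : Subgroup G) (SJ : Set J) (T : Set G) : Set G :=
  J.subtype '' SJ ∪ T ∪ T⁻¹

def transversalLanguage (J : Subgroup G) (LJ : Set (List J)) (T : Set G) : Set (List G) :=
  {u | ∃ w ∈ LJ, ∃ t ∈ T, u = w.map J.subtype ++ [t]}

lemma image_subtype_subset_transversalGenSet : J.subtype '' SJ ⊆ transversalGenSet J SJ T :=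
  fun _ hx => Or.inl (Or.inl hx)

lemma subset_transversalGenSet : T ⊆ transversalGenSet J SJ T :=
  fun _ hx => Or.inl (Or.inr hx)

lemma finite_transversalGenSet (hSJ : SJ.Finite) (hT : T.Finite) :
    (transversalGenSet J SJ T).Finite :=
  ((hSJ.image _).union hT).union hT.inv

lemma isSymmGenSet_transversalGenSet (hSJ : IsSymmGenSet SJ) (hT : T.Finite)
    (hJT : (J : Set G) * T = Set.univ) : IsSymmGenSet (transversalGenSet J SJ T) := by
  obtain ⟨hfin, hsymm, hgen⟩ := hSJ
  refine ⟨finite_transversalGenSet hfin hT, ?_, ?_⟩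
  · rintro x ((⟨y, hy, rfl⟩ | hx) | hx)
    · exact .inl (.inl ⟨y⁻¹, hsymm y hy, map_inv _ _⟩)
    · exact .inr (by simpa using hx)
    · exact .inl (.inr hx)
  · have hJ : J ≤ Subgroup.closure (transversalGenSet J SJ T) :=
      calc J = (Subgroup.closure SJ).map J.subtype := by
            rw [hgen, ← MonoidHom.range_eq_map, J.range_subtype]
        _ = Subgroup.closure (J.subtype '' SJ) := MonoidHom.map_closure _ _
        _ ≤ _ := Subgroup.closure_mono image_subtype_subset_transversalGenSet
    refine eq_top_iff.mpr fun g _ => ?_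
    obtain ⟨j, hj, t, ht, rfl⟩ := Set.mem_mul.mp (Set.eq_univ_iff_forall.mp hJT g)
    exact mul_mem (hJ hj) (Subgroup.subset_closure (subset_transversalGenSet ht))

lemma isLanguageFor_transversalLanguage (hLJ : IsLanguageFor SJ LJ)
    (hJT : (J : Set G) * T = Set.univ) :
    IsLanguageFor (transversalGenSet J SJ T) (transversalLanguage J LJ T) := by
  refine ⟨?_, fun g => ?_⟩
  · rintro _ ⟨w, hw, t, ht, rfl⟩ x hx
    rcases List.mem_append.mp hx with hx | hx
    · obtain ⟨y, hy, rfl⟩ := List.mem_map.mp hx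
      exact image_subtype_subset_transversalGenSet ⟨y, hLJ.1 w hw y hy, rfl⟩
    · exact List.mem_singleton.mp hx ▸ subset_transversalGenSet ht
  · obtain ⟨j, hj, t, ht, rfl⟩ := Set.mem_mul.mp (Set.eq_univ_iff_forall.mp hJT g)
    obtain ⟨w, hw, hwj⟩ := hLJ.2 ⟨j, hj⟩
    refine ⟨_, ⟨w, hw, t, ht, rfl⟩, ?_⟩
    rw [List.prod_append, List.prod_hom, hwj, List.prod_singleton, J.subtype_apply]

lemma exists_forall_genRelated_wordDist_le (hSJ : SJ.Finite) (hT : T.Finite) :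
    ∃ m, ∀ v w : List J, ∀ s ∈ T, ∀ t ∈ T,
      GenRelated (transversalGenSet J SJ T) (v.map J.subtype ++ [s]) (w.map J.subtype ++ [t]) →
        wordDist SJ v.prod w.prod ≤ m := by
  set F : Set G := (fun p : G × G × G => p.1 * p.2.1 * p.2.2⁻¹) ''
    (T ×ˢ insert 1 (transversalGenSet J SJ T) ×ˢ T)
  have hF : F.Finite :=
    (hT.prod (((finite_transversalGenSet hSJ hT).insert 1).prod hT)).image _
  obtain ⟨m, hm⟩ :=
    ((hF.preimage Subtype.val_injective.injOn).image (wordDist SJ 1)).bddAbove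
  refine ⟨m, fun v w s hs t ht hvw => ?_⟩
  obtain ⟨x, hx, hxeq⟩ := hvw.exists_mem_insert_one
  have hdiff : ((v.prod⁻¹ * w.prod : J) : G) = s * x * t⁻¹ := by
    simp only [List.prod_append, List.prod_hom, List.prod_singleton, J.subtype_apply] at hxeq
    rw [Subgroup.coe_mul, Subgroup.coe_inv, eq_mul_inv_iff_mul_eq, mul_assoc, hxeq]
    group
  rw [← wordDist_one_inv_mul]
  exact hm ⟨_, by rw [Set.mem_preimage, hdiff]; exact ⟨(s, x, t), ⟨hs, hx, ht⟩, rfl⟩, rfl⟩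

lemma isAsyncCombing_transversalLanguage (hSJ : IsSymmGenSet SJ) (hLJ : IsAsyncCombing SJ LJ)
    (hT : T.Finite) (hJT : (J : Set G) * T = Set.univ) :
    IsAsyncCombing (transversalGenSet J SJ T) (transversalLanguage J LJ T) := by
  obtain ⟨hLJ, K, hK⟩ := hLJ
  set SG := transversalGenSet J SJ T
  have hSG := isSymmGenSet_transversalGenSet hSJ hT hJT
  have hSJ' := hSJ.submonoid_closure_eq_top
  have hSG' := hSG.submonoid_closure_eq_top
  obtain ⟨m, hm⟩ := exists_forall_genRelated_wordDist_le (J := J) hSJ.1 hT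
  refine ⟨isLanguageFor_transversalLanguage hLJ hJT, 1 + K * (m + 1) + 1, ?_⟩
  rintro _ ⟨v, hv, s, hs, rfl⟩ _ ⟨w, hw, t, ht, rfl⟩ hvw
  have hJ : BoundedLagFellow SG (K * (m + 1)) (v.map J.subtype) (w.map J.subtype) :=
    (boundedLagFellow_of_wordDist_le hSJ' hLJ hK hv hw (hm v w s hs t ht hvw)).map hSJ'
      J.subtype fun y hy => image_subtype_subset_transversalGenSet ⟨y, hy, rfl⟩
  have hvs : SyncFellow SG 1 (v.map J.subtype ++ [s]) (v.map J.subtype) :=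
    (syncFellow_append (List.forall_mem_singleton.mpr (subset_transversalGenSet hs)) _).symm
      hSG.2.1 hSG'
  have hwt : SyncFellow SG 1 (w.map J.subtype) (w.map J.subtype ++ [t]) :=
    syncFellow_append (List.forall_mem_singleton.mpr (subset_transversalGenSet ht)) _
  exact ((hvs.boundedLagFellow.trans hSG' hJ).trans hSG' hwt.boundedLagFellow).asyncFellow

end Transversal

theorem asyncCombable_of_finiteIndex_subgroup_general {G : Type*} [Group G]
    (J : Subgroup G) (hJ : J.FiniteIndex) (h : AsyncCombable J) :
    AsyncCombable G := by
  obtain ⟨SJ, LJ, hSJ, hLJ⟩ := h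
  obtain ⟨T, hT, -⟩ := J.exists_isComplement_right 1
  exact ⟨_, _, isSymmGenSet_transversalGenSet hSJ hT.finite_right hT.mul_eq,
    isAsyncCombing_transversalLanguage hSJ hLJ hT.finite_right hT.mul_eq⟩

/-- If `J` is a finite index subgroup of a finitely generated group `G` and `J`
admits an asynchronous combing, then `G` admits an asynchronous combing. -/
theorem asyncCombable_of_finiteIndex_subgroup {G : Type*} [Group G] [Group.FG G]
    (J : Subgroup G) (hJ : J.FiniteIndex) (h : AsyncCombable J) :
    AsyncCombable G :=
  asyncCombable_of_finiteIndex_subgroup_general J hJ h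
end

section
/- Every asynchronously combable finitely generated group is finitely presented. -/
/-- `G` is finitely presented: it is the quotient of a free group of finite rank
by the normal closure of finitely many relators. -/
def IsFinitelyPresented (G : Type*) [Group G] : Prop :=
  ∃ (n : ℕ) (f : FreeGroup (Fin n) →* G) (R : Finset (FreeGroup (Fin n))),
    Function.Surjective f ∧ f.ker = Subgroup.normalClosure (R : Set (FreeGroup (Fin n)))

theorem IsFinitelyPresented.of_group_isFinitelyPresented {G : Type*} [Group G]
    (h : Group.IsFinitelyPresented G) : IsFinitelyPresented G := by
  obtain ⟨n, φ, hφ, R, hR, hRφ⟩ := h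
  exact ⟨n, φ, hR.toFinset, hφ, by rw [hR.coe_toFinset, hRφ]⟩

section FreeGroupLemmas

variable {α Q G : Type*} [Group Q] [Group G]

def FreeGroup.shortRelators [DecidableEq α] (f : FreeGroup α →* G) (r : ℕ) :
    Set (FreeGroup α) :=
  {σ | f σ = 1 ∧ σ.norm ≤ r}

theorem FreeGroup.finite_shortRelators [DecidableEq α] [Finite α] (f : FreeGroup α →* G)
    (r : ℕ) : (FreeGroup.shortRelators f r).Finite :=
  ((List.finite_length_le _ r).preimage FreeGroup.toWord_injective.injOn).subset fun _ hσ => hσ.2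

theorem FreeGroup.ker_le_ker_of_mul_of (f : FreeGroup α →* G) (π : FreeGroup α →* Q) (φ : G → Q)
    (hφ : ∀ g a, φ g * π (FreeGroup.of a) = φ (g * f (FreeGroup.of a))) : f.ker ≤ π.ker := by
  have hmul : ∀ x g, φ g * π x = φ (g * f x) := by
    intro x
    induction x using FreeGroup.induction_on with
    | C1 => simp
    | of a => exact fun g => hφ g a
    | inv_of a ih =>
      intro g
      have h := ih (g * (f (FreeGroup.of a))⁻¹)
      rw [inv_mul_cancel_right] at h
      rw [_root_.map_inv, _root_.map_inv, ← h, mul_inv_cancel_right]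
    | mul x y hx hy =>
      intro g
      rw [_root_.map_mul, ← mul_assoc, hx, hy, _root_.map_mul, mul_assoc]
  intro x hx
  have h := hmul x 1
  rwa [f.mem_ker.1 hx, mul_one, mul_eq_left] at h

/-- Two paths `p`, `q` in a free group with steps of length at most one, joined by rungs `ρ t`
of length at most `K`, are homotopic modulo the relators of length at most `2K + 2`. -/
theorem FreeGroup.map_mul_eq_of_ladder [DecidableEq α] (f : FreeGroup α →* G)
    (π : FreeGroup α →* Q) {K : ℕ} (hπ : FreeGroup.shortRelators f (2 * K + 2) ⊆ π.ker)
    {p q ρ : ℕ → FreeGroup α}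
    (hp : ∀ t, ((p t)⁻¹ * p (t + 1)).norm ≤ 1) (hq : ∀ t, ((q t)⁻¹ * q (t + 1)).norm ≤ 1)
    (hρ : ∀ t, f (ρ t) = (f (p t))⁻¹ * f (q t)) (hρK : ∀ t, (ρ t).norm ≤ K) (h0 : p 0 = q 0)
    (t : ℕ) : π (p t) * π (ρ t) = π (q t) := by
  induction t with
  | zero =>
    have hρ0 : π (ρ 0) = 1 := hπ ⟨by rw [hρ, h0, inv_mul_cancel], by linarith [hρK 0]⟩
    rw [hρ0, mul_one, h0]
  | succ t ih =>
    set a := (p t)⁻¹ * p (t + 1)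
    set b := (q t)⁻¹ * q (t + 1)
    have hσ : π (a * ρ (t + 1) * b⁻¹ * (ρ t)⁻¹) = 1 := by
      refine hπ ⟨by simp only [a, b, _root_.map_mul, _root_.map_inv, hρ]; group, ?_⟩
      have h₁ := FreeGroup.norm_mul_le (a * ρ (t + 1) * b⁻¹) (ρ t)⁻¹
      have h₂ := FreeGroup.norm_mul_le (a * ρ (t + 1)) b⁻¹
      have h₃ := FreeGroup.norm_mul_le a (ρ (t + 1))
      rw [FreeGroup.norm_inv_eq] at h₁ h₂
      linarith [hp t, hq t, hρK t, hρK (t + 1)]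
    have hsquare : π a * π (ρ (t + 1)) = π (ρ t) * π b := by
      simp only [_root_.map_mul, _root_.map_inv] at hσ
      rwa [mul_inv_eq_one, mul_inv_eq_iff_eq_mul] at hσ
    calc π (p (t + 1)) * π (ρ (t + 1)) = π (p t) * (π a * π (ρ (t + 1))) := by
          simp only [a, _root_.map_mul, _root_.map_inv]
          group
      _ = π (q (t + 1)) := by
          rw [hsquare, ← mul_assoc, ih]
          simp only [b, _root_.map_mul, _root_.map_inv, mul_inv_cancel_left]

end FreeGroupLemmas

section FreeWords

variable {G : Type*} {S : Set G}

open Classical in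
noncomputable def freeLetter (S : Set G) (x : G) : FreeGroup S :=
  if hx : x ∈ S then FreeGroup.of ⟨x, hx⟩ else 1

noncomputable def freeWord (S : Set G) (w : List G) : FreeGroup S :=
  (w.map (freeLetter S)).prod

@[simp]
theorem freeWord_cons (x : G) (w : List G) :
    freeWord S (x :: w) = freeLetter S x * freeWord S w := by
  simp [freeWord]

@[simp]
theorem freeWord_append (v w : List G) : freeWord S (v ++ w) = freeWord S v * freeWord S w := by
  simp [freeWord]

section Norm

variable [DecidableEq G]

theorem norm_freeLetter_le (x : G) : (freeLetter S x).norm ≤ 1 := by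
  unfold freeLetter
  split_ifs <;> simp

theorem norm_freeWord_le (w : List G) : (freeWord S w).norm ≤ w.length := by
  induction w with
  | nil => simp [freeWord]
  | cons x w ih =>
    rw [freeWord_cons, List.length_cons, add_comm]
    exact (FreeGroup.norm_mul_le _ _).trans (add_le_add (norm_freeLetter_le x) ih)

theorem norm_inv_mul_freeWord_take_le (w : List G) {m n : ℕ} (h : m ≤ n) :
    ((freeWord S (w.take m))⁻¹ * freeWord S (w.take n)).norm ≤ n - m := by
  obtain ⟨k, rfl⟩ := Nat.exists_eq_add_of_le h
  rw [List.take_add, freeWord_append, inv_mul_cancel_left]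
  exact (norm_freeWord_le _).trans ((List.length_take_le _ _).trans (by omega))

end Norm

variable [Group G]

theorem lift_freeLetter {x : G} (hx : x ∈ S) : FreeGroup.lift (↑) (freeLetter S x) = x := by
  rw [freeLetter, dif_pos hx, FreeGroup.lift_apply_of]

theorem lift_freeWord {w : List G} (hw : ∀ x ∈ w, x ∈ S) :
    FreeGroup.lift (↑) (freeWord S w) = w.prod := by
  rw [freeWord, map_list_prod, List.map_map]
  conv_rhs => rw [← List.map_id w]
  exact congrArg _ (List.map_congr_left fun x hx => lift_freeLetter (hw x hx))

theorem exists_norm_le_of_wordDist_le [DecidableEq G] {a b : G} {K : ℕ}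
    (hab : ∃ w : List G, (∀ x ∈ w, x ∈ S) ∧ w.prod = a⁻¹ * b) (h : wordDist S a b ≤ K) :
    ∃ ρ : FreeGroup S, FreeGroup.lift (↑) ρ = a⁻¹ * b ∧ ρ.norm ≤ K := by
  obtain ⟨w, hw, hwb⟩ := hab
  have hne : {n | ∃ u : List G, (∀ x ∈ u, x ∈ S) ∧ u.length = n ∧ u.prod = a⁻¹ * b}.Nonempty :=
    ⟨w.length, w, hw, rfl, hwb⟩
  obtain ⟨u, hu, hul, hub⟩ := Nat.sInf_mem hne
  exact ⟨freeWord S u, by rw [lift_freeWord hu, hub], (norm_freeWord_le u).trans (hul ▸ h)⟩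

end FreeWords

section Combing

variable {G Q : Type*} [Group G] [Group Q] {S : Set G} {K : ℕ}

theorem IsLanguageFor.exists_word {L : Set (List G)} (hL : IsLanguageFor S L) (g : G) :
    ∃ u : List G, (∀ x ∈ u, x ∈ S) ∧ u.prod = g :=
  let ⟨u, huL, hug⟩ := hL.2 g
  ⟨u, hL.1 u huL, hug⟩

theorem IsLanguageFor.surjective_lift {L : Set (List G)} (hL : IsLanguageFor S L) :
    Function.Surjective (FreeGroup.lift ((↑) : S → G)) := fun g =>
  let ⟨u, hu, hug⟩ := hL.exists_word g
  ⟨freeWord S u, by rw [lift_freeWord hu, hug]⟩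

variable [DecidableEq G]

theorem AsyncFellow.exists_map_freeWord_mul_eq {v w : List G} (hvw : AsyncFellow S K v w)
    (hv : ∀ x ∈ v, x ∈ S) (hw : ∀ x ∈ w, x ∈ S)
    (hS : ∀ g : G, ∃ u : List G, (∀ x ∈ u, x ∈ S) ∧ u.prod = g) (π : FreeGroup S →* Q)
    (hπ : FreeGroup.shortRelators (FreeGroup.lift ((↑) : S → G)) (2 * K + 2) ⊆ π.ker) :
    ∃ ρ : FreeGroup S, FreeGroup.lift ((↑) : S → G) ρ = v.prod⁻¹ * w.prod ∧ ρ.norm ≤ K ∧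
      π (freeWord S v) * π ρ = π (freeWord S w) := by
  obtain ⟨h, hmono, h0, hstep, ⟨T, hT⟩, hdist⟩ := hvw
  choose ρ hρ hρK using fun t => exists_norm_le_of_wordDist_le (hS _) (hdist t)
  have hladder := FreeGroup.map_mul_eq_of_ladder _ π hπ
    (p := fun t => freeWord S (v.take t)) (q := fun t => freeWord S (w.take (h t)))
    (fun t => (norm_inv_mul_freeWord_take_le v (Nat.le_add_right t 1)).trans (by omega))
    (fun t => (norm_inv_mul_freeWord_take_le w (hmono (Nat.le_add_right t 1))).trans
      (by have := hstep t; omega))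
    (fun t => by
      rw [hρ, lift_freeWord fun x hx => hv x (List.mem_of_mem_take hx),
        lift_freeWord fun x hx => hw x (List.mem_of_mem_take hx)]
      rfl)
    hρK (by simp [h0])
  set t := max T v.length
  have hvt : v.take t = v := List.take_of_length_le (le_max_right _ _)
  have hwt : w.take (h t) = w := List.take_of_length_le (hT t (le_max_left _ _))
  refine ⟨ρ t, ?_, hρK t, ?_⟩
  · rw [hρ, pathAt, pathAt, hvt, hwt]
  · simpa only [hvt, hwt] using hladder t

theorem AsyncFellow.map_freeWord_mul_of_eq {v w : List G} {s : S} (hvw : AsyncFellow S K v w)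
    (hv : ∀ x ∈ v, x ∈ S) (hw : ∀ x ∈ w, x ∈ S)
    (hS : ∀ g : G, ∃ u : List G, (∀ x ∈ u, x ∈ S) ∧ u.prod = g) (hs : w.prod = v.prod * s)
    (π : FreeGroup S →* Q)
    (hπ : FreeGroup.shortRelators (FreeGroup.lift ((↑) : S → G)) (2 * K + 2) ⊆ π.ker) :
    π (freeWord S v) * π (FreeGroup.of s) = π (freeWord S w) := by
  obtain ⟨ρ, hρ, hρK, hρπ⟩ := hvw.exists_map_freeWord_mul_eq hv hw hS π hπ
  have hρs : π (ρ * (FreeGroup.of s)⁻¹) = 1 := by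
    refine hπ ⟨by rw [map_mul, map_inv, hρ, hs, FreeGroup.lift_apply_of]; group, ?_⟩
    have := FreeGroup.norm_mul_le ρ (FreeGroup.of s)⁻¹
    rw [FreeGroup.norm_inv_eq, FreeGroup.norm_of] at this
    omega
  rw [map_mul, map_inv, mul_inv_eq_one] at hρs
  rw [← hρs, hρπ]

theorem ker_lift_eq_normalClosure_of_asyncFellow {L : Set (List G)} (hL : IsLanguageFor S L)
    (hK : ∀ v ∈ L, ∀ w ∈ L, GenRelated S v w → AsyncFellow S K v w) :
    (FreeGroup.lift ((↑) : S → G)).ker =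
      Subgroup.normalClosure
        (FreeGroup.shortRelators (FreeGroup.lift ((↑) : S → G)) (2 * K + 2)) := by
  set N := Subgroup.normalClosure
    (FreeGroup.shortRelators (FreeGroup.lift ((↑) : S → G)) (2 * K + 2))
  refine le_antisymm ?_ (Subgroup.normalClosure_le_normal fun σ hσ => hσ.1)
  have hπ : FreeGroup.shortRelators (FreeGroup.lift ((↑) : S → G)) (2 * K + 2) ⊆
      (QuotientGroup.mk' N).ker :=
    (QuotientGroup.ker_mk' N).symm ▸ Subgroup.subset_normalClosure
  choose c hcL hc using hL.2
  have hcS : ∀ g, ∀ x ∈ c g, x ∈ S := fun g => hL.1 _ (hcL g)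
  refine (FreeGroup.ker_le_ker_of_mul_of _ _ (fun g => QuotientGroup.mk' N (freeWord S (c g)))
    fun g s => ?_).trans (QuotientGroup.ker_mk' N).le
  rw [FreeGroup.lift_apply_of]
  exact (hK _ (hcL g) _ (hcL _) (Or.inr ⟨s, s.2, by rw [hc, hc]⟩)).map_freeWord_mul_of_eq
    (hcS g) (hcS _) hL.exists_word (by rw [hc, hc]) _ hπ

end Combing

/-- Every asynchronously combable finitely generated group is finitely presented. -/
theorem isFinitelyPresented_of_asyncCombable {G : Type*} [Group G]
    (h : AsyncCombable G) : IsFinitelyPresented G := by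
  classical
  obtain ⟨S, L, ⟨hSfin, -, -⟩, hL, K, hK⟩ := h
  have : Finite S := hSfin.to_subtype
  exact .of_group_isFinitelyPresented <| .of_surjective _ hL.surjective_lift
    ⟨_, FreeGroup.finite_shortRelators _ (2 * K + 2),
      (ker_lift_eq_normalClosure_of_asyncFellow hL hK).symm⟩
end

section
/- The language of even-length palindromes {ww^R : w a word over {a,b}} is not accepted by any deterministic pushdown automaton, i.e., it is not deterministic context-free. -/
/-- A deterministic pushdown automaton over input alphabet `α` with stack
alphabet `Γ` and state set `σ`.  For each state and top stack symbol, the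
machine either performs an ε-move (popping the top symbol and pushing a string,
without reading input) or, depending on the next input symbol, performs a
reading move (or gets stuck if `none`).  This built-in dichotomy is exactly the
determinism condition for pushdown automata. -/
structure DPDA (α Γ σ : Type) where
  /-- the start state -/
  start : σ
  /-- the initial stack symbol -/
  startSym : Γ
  /-- the accept states -/
  accept : σ → Prop
  /-- the transition function: given the current state and top stack symbol,
  either an ε-move (new state, string pushed in place of the top symbol) or
  a function giving, for each possible input symbol read, the move (if any) -/
  step : σ → Γ → (σ × List Γ) ⊕ (α → Option (σ × List Γ))

namespace DPDA

variable {α Γ σ : Type} (M : DPDA α Γ σ)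

/-- Reachability between configurations (state, remaining input, stack). -/
inductive Reaches : σ × List α × List Γ → σ × List α × List Γ → Prop
  | refl (c : σ × List α × List Γ) : Reaches c c
  | eps {q : σ} {Z : Γ} {w : List α} {s : List Γ} {q' : σ} {γ : List Γ}
      {c : σ × List α × List Γ} :
      M.step q Z = Sum.inl (q', γ) → Reaches (q', w, γ ++ s) c →
      Reaches (q, w, Z :: s) c
  | read {q : σ} {Z : Γ} {a : α} {w : List α} {s : List Γ} {q' : σ} {γ : List Γ}
      {f : α → Option (σ × List Γ)} {c : σ × List α × List Γ} :
      M.step q Z = Sum.inr f → f a = some (q', γ) → Reaches (q', w, γ ++ s) c →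
      Reaches (q, a :: w, Z :: s) c

/-- The language accepted by the deterministic pushdown automaton: all input
words which, when completely read, can bring the machine to an accept state. -/
def accepts : Set (List α) :=
  {w | ∃ (q : σ) (s : List Γ),
    M.Reaches (M.start, w, [M.startSym]) (q, [], s) ∧ M.accept q}

end DPDA

/-- The two-letter alphabet {a, b}. -/
inductive ABLetter : Type
  | a : ABLetter
  | b : ABLetter
  deriving DecidableEq

instance : Fintype ABLetter :=
  ⟨{ABLetter.a, ABLetter.b}, by intro x; cases x <;> simp⟩

/-!
Run the machine on `aᴺbbaᴺ`. The configuration reached after reading a prefix `P` determines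
`P`, since `P` is recovered from the set of nonempty `u` with `P ++ u` a palindrome. Hence only
finitely many prefixes lead to configurations with a low stack, and for large `N` the stack stays
high once `aᴺ` has been read. While it climbs during `aᴺ`, pigeonhole gives two low points
`t₁ < t₂` (the stack below the top at `t₁` is never touched again) with the same state and top
symbol. The factor `aˢ` read between them can be read twice, so `aᴺ⁺ˢbbaᴺ` is accepted, which is
not a palindrome; and `s = 0` is impossible, as the machine would then loop without reading.
-/

section LowPoints

variable (h : ℕ → ℕ) {K T t : ℕ}

lemma exists_lowPoint {ℓ : ℕ} (hstep : ∀ j < T, h (j + 1) ≤ h j + K)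
    (hhigh : ∀ j, t ≤ j → j ≤ T → ℓ < h j) (ht : t ≤ T) (h0 : h 0 ≤ ℓ) :
    ∃ u < t, h u ≤ ℓ ∧ ℓ < h u + K ∧ ∀ j, u < j → j ≤ T → ℓ < h j := by
  set u := Nat.findGreatest (fun j => h j ≤ ℓ) T
  have hu : h u ≤ ℓ := Nat.findGreatest_spec (P := fun j => h j ≤ ℓ) (Nat.zero_le T) h0
  have hafter : ∀ j, u < j → j ≤ T → ℓ < h j := fun j hj hjT =>
    not_le.1 (Nat.findGreatest_is_greatest (P := fun j => h j ≤ ℓ) hj hjT)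
  have hut : u < t := by
    by_contra! htu
    exact absurd hu (not_le.2 (hhigh u htu (Nat.findGreatest_le T)))
  have := hafter (u + 1) u.lt_succ_self (by omega)
  have := hstep u (by omega)
  exact ⟨u, hut, hu, by omega, hafter⟩

/-- The last times at which `h ≤ (i + 1) * (K + 1)` are distinct low points, so two of them
have the same colour. -/
lemma exists_lowPoint_pair {X : Type*} [Fintype X] (col : ℕ → X)
    (hstep : ∀ j < T, h (j + 1) ≤ h j + K) (h0 : h 0 ≤ K + 1)
    (hhigh : ∀ j, t ≤ j → j ≤ T → (Fintype.card X + 1) * (K + 1) < h j) (ht : t ≤ T) :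
    ∃ t₁ t₂, t₁ < t₂ ∧ t₂ < t ∧ col t₁ = col t₂ ∧ ∀ j, t₁ ≤ j → j ≤ T → h t₁ ≤ h j := by
  have level : ∀ i : Fin (Fintype.card X + 1), ∃ u < t, h u ≤ (i + 1) * (K + 1) ∧
      (i + 1) * (K + 1) < h u + K ∧ ∀ j, u < j → j ≤ T → (i + 1) * (K + 1) < h j := by
    intro i
    have hi : (i + 1) * (K + 1) ≤ (Fintype.card X + 1) * (K + 1) :=
      Nat.mul_le_mul_right _ i.isLt
    refine exists_lowPoint h hstep (fun j hj hjT => hi.trans_lt (hhigh j hj hjT)) ht ?_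
    exact h0.trans (Nat.le_mul_of_pos_left _ i.succ_pos)
  choose u hut hu hu' hafter using level
  obtain ⟨i, i', hne, hcol⟩ := Fintype.exists_ne_map_eq_of_card_lt (col ∘ u) (by simp)
  wlog hii' : i < i' generalizing i i'
  · exact this i' i hne.symm hcol.symm (lt_of_le_of_ne (not_lt.1 hii') hne.symm)
  have hgap : (i + 1) * (K + 1) + K < (i' + 1) * (K + 1) := by
    have : (i + 1 + 1) * (K + 1) ≤ (i' + 1) * (K + 1) := Nat.mul_le_mul_right _ (by omega)
    linarith
  have huu : u i < u i' := by
    by_contra! hle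
    rcases hle.lt_or_eq with hlt | heq
    · linarith [hafter i' (u i) hlt ((hut i).le.trans ht), hu i]
    · have := hu' i'
      rw [heq] at this
      linarith [hu i]
  refine ⟨u i, u i', huu, hut i', hcol, fun j hj hjT => ?_⟩
  rcases hj.lt_or_eq with hj | rfl
  · exact (hu i).trans (hafter i j hj hjT).le
  · exact le_rfl

end LowPoints

def SeparatesPrefixes {α : Type*} (L : Set (List α)) : Prop :=
  ∀ P P', (∀ u ≠ [], P ++ u ∈ L ↔ P' ++ u ∈ L) → P = P'

def evenPalindromes (α : Type*) : Set (List α) := {u | ∃ w, u = w ++ w.reverse}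

namespace evenPalindromes

variable {α : Type*} {a b : α}

lemma reverse_eq {u : List α} (h : u ∈ evenPalindromes α) : u.reverse = u := by
  obtain ⟨w, rfl⟩ := h
  simp

lemma append_cons_cons_reverse_mem (P : List α) (x : α) :
    P ++ x :: x :: P.reverse ∈ evenPalindromes α :=
  ⟨P ++ [x], by simp⟩

/-- Distinct prefixes are separated by a nonempty continuation: `P ++ xx ++ Pᴿ` is a palindrome,
and for a shorter `P'` the word `P' ++ xx ++ Pᴿ` cannot be one for both letters `x = a, b`. -/
lemma separatesPrefixes (hab : a ≠ b) : SeparatesPrefixes (evenPalindromes α) := by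
  intro P P' h
  wlog hle : P'.length ≤ P.length generalizing P P'
  · exact (this P' P (fun u hu => (h u hu).symm) (le_of_not_ge hle)).symm
  have key : ∀ x, P ++ x :: x :: P'.reverse = P' ++ x :: x :: P.reverse := fun x => by
    simpa using reverse_eq ((h _ (by simp)).1 (append_cons_cons_reverse_mem P x))
  rcases hle.eq_or_lt with heq | hlt
  · exact (List.append_inj (key a) heq.symm).1
  · have ha := congrArg (·[P'.length]?) (key a)
    have hb := congrArg (·[P'.length]?) (key b)
    simp [List.getElem?_append_left hlt] at ha hb
    exact (hab (Option.some_injective _ (ha.symm.trans hb))).elim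

lemma replicate_append_not_mem (hab : a ≠ b) {N d : ℕ} (hd : 0 < d) :
    List.replicate (N + d) a ++ b :: b :: List.replicate N a ∉ evenPalindromes α := by
  intro h
  have := congrArg (·[N]?) (reverse_eq h)
  simp [List.getElem?_append_left, hd] at this
  exact hab this.symm

lemma pump_not_mem (hab : a ≠ b) {N : ℕ} {P δ v : List α}
    (hw : List.replicate N a ++ b :: b :: List.replicate N a = P ++ δ ++ v)
    (hlen : (P ++ δ).length ≤ N) (hδ : δ ≠ []) : P ++ δ ++ δ ++ v ∉ evenPalindromes α := by
  have hrep : P ++ δ = List.replicate (P ++ δ).length a := by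
    have := congrArg (List.take (P ++ δ).length) hw
    rw [List.take_append_of_le_length (by simpa using hlen), List.take_replicate,
      min_eq_left hlen, List.take_left] at this
    exact this.symm
  obtain ⟨-, hP, hδa⟩ := List.append_eq_replicate_iff.1 hrep
  obtain ⟨p, rfl⟩ : ∃ p, P = List.replicate p a := ⟨_, hP⟩
  obtain ⟨d, rfl⟩ : ∃ d, δ = List.replicate d a := ⟨_, hδa⟩
  have hpump : List.replicate p a ++ List.replicate d a ++ List.replicate d a ++ v =
      List.replicate (N + d) a ++ b :: b :: List.replicate N a := by
    rw [add_comm, List.replicate_add, List.append_assoc (List.replicate d a), hw]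
    simp only [← List.append_assoc, ← List.replicate_add]
    rw [show p + d + d = d + (p + d) by omega]
  rw [hpump]
  exact replicate_append_not_mem hab (Nat.pos_of_ne_zero (by simpa using hδ))

end evenPalindromes

namespace DPDA

variable {α Γ σ : Type} (M : DPDA α Γ σ)

def next : σ × List α × List Γ → Option (σ × List α × List Γ)
  | (_, _, []) => none
  | (q, w, Z :: s) =>
    match M.step q Z, w with
    | .inl (q', γ), w => some (q', w, γ ++ s)
    | .inr _, [] => none
    | .inr f, a :: w => (f a).map fun p => (p.1, w, p.2 ++ s)

def run : ℕ → σ × List α × List Γ → Option (σ × List α × List Γ)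
  | 0, c => some c
  | n + 1, c => (M.next c).bind (run n)

variable {M}

lemma next_eq_some_iff {q q' : σ} {w w' : List α} {s s' : List Γ} :
    M.next (q, w, s) = some (q', w', s') ↔ ∃ Z s₀ γ, s = Z :: s₀ ∧ s' = γ ++ s₀ ∧
      (M.step q Z = .inl (q', γ) ∧ w' = w ∨
        ∃ f a, M.step q Z = .inr f ∧ f a = some (q', γ) ∧ w = a :: w') := by
  rcases s with _ | ⟨Z, s₀⟩
  · simp [next]
  rcases hZ : M.step q Z with ⟨q₁, γ₁⟩ | f
  · simp [next, hZ]
    aesop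
  · rcases w with _ | ⟨a, w⟩
    · simp [next, hZ]
    · simp [next, hZ]
      aesop

section Runs

variable {q q' : σ} {w v : List α} {s s' : List Γ}

lemma next_consumes (h : M.next (q, w, s) = some (q', v, s')) :
    ∃ r, w = r ++ v ∧ ∀ u, M.next (q, r ++ u, s) = some (q', u, s') := by
  obtain ⟨Z, s₀, γ, rfl, rfl, ⟨hZ, rfl⟩ | ⟨f, a, hZ, hfa, rfl⟩⟩ := next_eq_some_iff.1 h
  · exact ⟨[], rfl, fun u => next_eq_some_iff.2 ⟨Z, s₀, γ, rfl, rfl, .inl ⟨hZ, rfl⟩⟩⟩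
  · exact ⟨[a], rfl, fun u => next_eq_some_iff.2 ⟨Z, s₀, γ, rfl, rfl, .inr ⟨f, a, hZ, hfa, rfl⟩⟩⟩

lemma next_append_stack {x y : List Γ} (h : M.next (q, w, x) = some (q', v, y)) (t : List Γ) :
    M.next (q, w, x ++ t) = some (q', v, y ++ t) := by
  obtain ⟨Z, s₀, γ, rfl, rfl, hmove⟩ := next_eq_some_iff.1 h
  exact next_eq_some_iff.2 ⟨Z, s₀ ++ t, γ, rfl, by simp, hmove⟩

lemma next_strip_stack {x t : List Γ} (h : M.next (q, w, x ++ t) = some (q', v, s))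
    (hx : x ≠ []) : ∃ y, s = y ++ t ∧ M.next (q, w, x) = some (q', v, y) := by
  obtain ⟨Z, x₀, rfl⟩ := List.exists_cons_of_ne_nil hx
  obtain ⟨Z, s₀, γ, hs, rfl, hmove⟩ := next_eq_some_iff.1 h
  obtain ⟨rfl, rfl⟩ := List.cons_eq_cons.1 hs
  exact ⟨γ ++ x₀, by simp, next_eq_some_iff.2 ⟨_, _, γ, rfl, rfl, hmove⟩⟩

section MaxPush

variable [Fintype α] [Fintype Γ] [Fintype σ]

def pushLength : (σ × List Γ) ⊕ (α → Option (σ × List Γ)) → ℕ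
  | .inl (_, γ) => γ.length
  | .inr f => Finset.univ.sup fun a => ((f a).map fun p => p.2.length).getD 0

variable (M) in
def maxPush : ℕ :=
  Finset.univ.sup fun p : σ × Γ => pushLength (M.step p.1 p.2)

variable (M) in
def pumpingHeight : ℕ :=
  (Fintype.card (σ × Option Γ) + 1) * (M.maxPush + 1)

lemma next_stack_length_le (h : M.next (q, w, s) = some (q', v, s')) :
    s'.length + 1 ≤ s.length + M.maxPush := by
  obtain ⟨Z, s₀, γ, rfl, rfl, hmove⟩ := next_eq_some_iff.1 h
  have hγ : γ.length ≤ pushLength (M.step q Z) := by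
    rcases hmove with ⟨hZ, -⟩ | ⟨f, a, hZ, hfa, -⟩
    · simp [hZ, pushLength]
    · rw [hZ, pushLength]
      exact Finset.le_sup_of_le (Finset.mem_univ a) (by simp [hfa])
  have hmax : pushLength (M.step q Z) ≤ M.maxPush :=
    Finset.le_sup (f := fun p : σ × Γ => pushLength (M.step p.1 p.2)) (Finset.mem_univ (q, Z))
  simp only [List.length_append, List.length_cons]
  omega

end MaxPush

variable {c d e : σ × List α × List Γ} {m n : ℕ}

@[simp] lemma run_zero : M.run 0 c = some c := rfl

lemma run_succ_eq_some_iff :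
    M.run (n + 1) c = some e ↔ ∃ d, M.next c = some d ∧ M.run n d = some e :=
  Option.bind_eq_some_iff

lemma run_add : M.run (m + n) c = (M.run m c).bind (M.run n) := by
  induction m generalizing c with
  | zero => simp
  | succ m ih =>
    rw [Nat.succ_add, run, run]
    cases M.next c <;> simp [ih]

lemma run_unique (hd : M.run n c = some d) (he : M.run n c = some e) : d = e :=
  Option.some_injective _ (hd.symm.trans he)

lemma run_sub (hmn : m ≤ n) (hm : M.run m c = some d) (hn : M.run n c = some e) :
    M.run (n - m) d = some e := by
  rwa [← Nat.add_sub_cancel' hmn, run_add, hm, Option.bind_some] at hn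

lemma exists_run_of_le (hmn : m ≤ n) (hn : M.run n c = some e) : ∃ d, M.run m c = some d := by
  rw [← Nat.add_sub_cancel' hmn, run_add] at hn
  cases h : M.run m c with
  | none => simp [h] at hn
  | some d => exact ⟨d, rfl⟩

lemma reaches_iff_exists_run : M.Reaches c d ↔ ∃ n, M.run n c = some d := by
  constructor
  · intro h
    induction h with
    | refl c => exact ⟨0, rfl⟩
    | eps hZ _ ih =>
      obtain ⟨n, hn⟩ := ih
      exact ⟨n + 1, run_succ_eq_some_iff.2
        ⟨_, next_eq_some_iff.2 ⟨_, _, _, rfl, rfl, .inl ⟨hZ, rfl⟩⟩, hn⟩⟩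
    | read hZ hfa _ ih =>
      obtain ⟨n, hn⟩ := ih
      exact ⟨n + 1, run_succ_eq_some_iff.2
        ⟨_, next_eq_some_iff.2 ⟨_, _, _, rfl, rfl, .inr ⟨_, _, hZ, hfa, rfl⟩⟩, hn⟩⟩
  · rintro ⟨n, hn⟩
    induction n generalizing c with
    | zero => exact Option.some_injective _ hn ▸ .refl c
    | succ n ih =>
      obtain ⟨⟨q', w', s'⟩, hc, hrun⟩ := run_succ_eq_some_iff.1 hn
      obtain ⟨q, w, s⟩ := c
      obtain ⟨Z, s₀, γ, rfl, rfl, ⟨hZ, rfl⟩ | ⟨f, a, hZ, hfa, rfl⟩⟩ := next_eq_some_iff.1 hc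
      · exact .eps hZ (ih hrun)
      · exact .read hZ hfa (ih hrun)

lemma run_consumes (h : M.run n (q, w, s) = some (q', v, s')) :
    ∃ r, w = r ++ v ∧ ∀ u, M.run n (q, r ++ u, s) = some (q', u, s') := by
  induction n generalizing q w s with
  | zero =>
    obtain ⟨rfl, rfl, rfl⟩ : q = q' ∧ w = v ∧ s = s' := by simpa using h
    exact ⟨[], rfl, fun u => rfl⟩
  | succ n ih =>
    obtain ⟨⟨q₁, w₁, s₁⟩, hc, hrun⟩ := run_succ_eq_some_iff.1 h
    obtain ⟨r₁, rfl, hnext⟩ := next_consumes hc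
    obtain ⟨r₂, rfl, hrest⟩ := ih hrun
    exact ⟨r₁ ++ r₂, by simp, fun u =>
      run_succ_eq_some_iff.2 ⟨_, by simpa using hnext (r₂ ++ u), hrest u⟩⟩

lemma input_length_le_of_run (h : M.run n c = some d) : d.2.1.length ≤ c.2.1.length := by
  obtain ⟨u, hu, -⟩ := run_consumes h
  simp [hu]

lemma run_append_stack {x y : List Γ} (h : M.run n (q, w, x) = some (q', v, y)) (t : List Γ) :
    M.run n (q, w, x ++ t) = some (q', v, y ++ t) := by
  induction n generalizing q w x with
  | zero => simp_all
  | succ n ih =>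
    obtain ⟨⟨q₁, w₁, x₁⟩, hc, hrun⟩ := run_succ_eq_some_iff.1 h
    exact run_succ_eq_some_iff.2 ⟨_, next_append_stack hc t, ih hrun⟩

lemma run_strip_stack {x t : List Γ} (h : M.run n (q, w, x ++ t) = some (q', v, s))
    (hlow : ∀ j d, j < n → M.run j (q, w, x ++ t) = some d → t.length < d.2.2.length) :
    ∃ y, s = y ++ t ∧ M.run n (q, w, x) = some (q', v, y) := by
  induction n generalizing q w x with
  | zero => simp_all
  | succ n ih =>
    obtain ⟨⟨q₁, w₁, s₁⟩, hc, hrun⟩ := run_succ_eq_some_iff.1 h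
    have hx : x ≠ [] := by
      rintro rfl
      simpa using hlow 0 _ n.succ_pos rfl
    obtain ⟨x₁, rfl, hnext⟩ := next_strip_stack hc hx
    obtain ⟨y, rfl, hrest⟩ := ih hrun fun j d hj hd =>
      hlow (j + 1) d (by omega) (run_succ_eq_some_iff.2 ⟨_, hc, hd⟩)
    exact ⟨y, rfl, run_succ_eq_some_iff.2 ⟨_, hnext, hrest⟩⟩

lemma run_trans (h₁ : M.run m c = some d) (h₂ : M.run n d = some e) :
    M.run (m + n) c = some e := by
  rw [run_add, h₁]
  exact h₂

lemma input_eq_nil_of_run (h : M.run n (q, [], s) = some (q', v, s')) : v = [] := by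
  obtain ⟨d, hd, -⟩ := run_consumes h
  exact (List.append_eq_nil_iff.1 hd.symm).2

lemma run_loop {Z : Γ} {ψ : List Γ} (h : M.run m (q, w, [Z]) = some (q, w, Z :: ψ))
    (i : ℕ) (β : List Γ) : ∃ β', M.run (i * m) (q, w, Z :: β) = some (q, w, Z :: β') := by
  induction i generalizing β with
  | zero => exact ⟨β, by simp⟩
  | succ i ih =>
    obtain ⟨β', hβ'⟩ := ih β
    exact ⟨ψ ++ β', by rw [Nat.succ_mul]; exact run_trans hβ' (run_append_stack h β')⟩

variable (M) in
def AcceptsFrom (c : σ × List α × List Γ) : Prop :=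
  ∃ n qf sf, M.run n c = some (qf, [], sf) ∧ M.accept qf

lemma mem_accepts_iff_acceptsFrom : w ∈ M.accepts ↔ M.AcceptsFrom (M.start, w, [M.startSym]) := by
  simp only [accepts, AcceptsFrom, Set.mem_ofPred_eq, reaches_iff_exists_run]
  aesop

/-- `u ≠ []` is needed: the run on `P` may pass an accept state before the ε-moves that lead
to `(q, [], s)`. -/
lemma mem_accepts_append_iff {P u : List α}
    (h : M.run n (M.start, P, [M.startSym]) = some (q, [], s)) (hu : u ≠ []) :
    P ++ u ∈ M.accepts ↔ M.AcceptsFrom (q, u, s) := by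
  obtain ⟨d, hd, hrun⟩ := run_consumes h
  rw [List.append_nil] at hd
  subst hd
  rw [mem_accepts_iff_acceptsFrom]
  constructor
  · rintro ⟨k, qf, sf, hk, hqf⟩
    rcases le_or_gt n k with hnk | hkn
    · exact ⟨k - n, qf, sf, run_sub hnk (hrun u) hk, hqf⟩
    · exact absurd (input_eq_nil_of_run (run_sub hkn.le hk (hrun u))) hu
  · rintro ⟨k, qf, sf, hk, hqf⟩
    exact ⟨n + k, qf, sf, run_trans (hrun u) hk, hqf⟩

/-- If the loop reads nothing (`δ = []`), it repeats forever, so the run can only have finished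
reading when there was nothing left to read. -/
lemma pump_of_loop {Z : Γ} {β γ : List Γ} {v₁ v₂ : List α} {qf : σ} {sf : List Γ}
    (hloop : M.run m (q, v₁, Z :: β) = some (q, v₂, Z :: γ)) (hm : 0 < m) (hmn : m ≤ n)
    (hrun : M.run n (q, v₁, Z :: β) = some (qf, [], sf))
    (hlow : ∀ j d, j ≤ n → M.run j (q, v₁, Z :: β) = some d → β.length < d.2.2.length) :
    ∃ δ, v₁ = δ ++ v₂ ∧ (δ = [] → v₂ = []) ∧
      ∃ k s, M.run k (q, δ ++ v₁, Z :: β) = some (qf, [], s) := by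
  have strip : ∀ {k q' v s}, k ≤ n → M.run k (q, v₁, [Z] ++ β) = some (q', v, s) →
      ∃ y, s = y ++ β ∧ M.run k (q, v₁, [Z]) = some (q', v, y) := fun hk he =>
    run_strip_stack he fun j d hj hd => hlow j d (by omega) hd
  obtain ⟨x, hx, hloop'⟩ := strip hmn hloop
  obtain ⟨y, -, hrun'⟩ := strip le_rfl hrun
  have hx₀ : x ≠ [] := by
    rintro rfl
    have := hlow m _ hmn hloop
    simp_all
  obtain ⟨X, ψ, rfl⟩ := List.exists_cons_of_ne_nil hx₀
  obtain ⟨rfl, -⟩ := List.cons_eq_cons.1 hx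
  obtain ⟨δ, rfl, hδ⟩ := run_consumes hloop'
  have htail : M.run (n - m) (q, v₂, Z :: ψ) = some (qf, [], y) := run_sub hmn hloop' hrun'
  refine ⟨δ, rfl, ?_, m + (m + (n - m)), y ++ ψ ++ β, ?_⟩
  · rintro rfl
    obtain ⟨β', hβ'⟩ := run_loop hloop' (n + 1) β
    exact input_eq_nil_of_run (run_sub (Nat.le_mul_of_pos_right _ hm |>.trans' n.le_succ) hrun hβ')
  · refine run_trans (run_append_stack (hδ (δ ++ v₂)) β)
      (run_trans (d := (q, v₂, Z :: ψ ++ ψ ++ β)) ?_ ?_)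
    · simpa using run_append_stack (hδ v₂) (ψ ++ β)
    · simpa using run_append_stack htail (ψ ++ β)

end Runs

lemma pump_of_lowPoints {q₀ q qf : σ} {Z₀ : Γ} {w v₁ v₂ : List α} {s₁ s₂ sf : List Γ}
    {t₁ t₂ T : ℕ} (hrun : M.run T (q₀, w, [Z₀]) = some (qf, [], sf))
    (h₁ : M.run t₁ (q₀, w, [Z₀]) = some (q, v₁, s₁))
    (h₂ : M.run t₂ (q₀, w, [Z₀]) = some (q, v₂, s₂)) (hhead : s₁.head? = s₂.head?)
    (ht₁₂ : t₁ < t₂) (ht₂ : t₂ ≤ T)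
    (hlow : ∀ j d, t₁ ≤ j → j ≤ T → M.run j (q₀, w, [Z₀]) = some d →
      s₁.length ≤ d.2.2.length) :
    ∃ P δ, w = P ++ δ ++ v₂ ∧ (δ = [] → v₂ = []) ∧
      ∃ n s, M.run n (q₀, P ++ δ ++ δ ++ v₂, [Z₀]) = some (qf, [], s) := by
  have hfrom₁ : ∀ {j e}, t₁ ≤ j → M.run j (q₀, w, [Z₀]) = some e →
      M.run (j - t₁) (q, v₁, s₁) = some e := fun hj he => run_sub hj h₁ he
  obtain ⟨Z, β, rfl⟩ : ∃ Z β, s₁ = Z :: β := by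
    cases s₁ with
    | nil =>
      obtain ⟨m, rfl⟩ := Nat.exists_eq_add_of_lt ht₁₂
      have := hfrom₁ ht₁₂.le h₂
      rw [show t₁ + m + 1 - t₁ = m + 1 by omega] at this
      simp [run, next] at this
    | cons Z β => exact ⟨Z, β, rfl⟩
  obtain ⟨γ, rfl⟩ : ∃ γ, s₂ = Z :: γ := by
    cases s₂ with
    | nil => simp at hhead
    | cons Z' γ => exact ⟨γ, by simp_all⟩
  obtain ⟨δ, rfl, hδ, k, s, hk⟩ := pump_of_loop (hfrom₁ ht₁₂.le h₂) (by omega) (by omega)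
    (hfrom₁ (by omega) hrun) fun j d hj hd => by
      have := hlow (t₁ + j) d (by omega) (by omega) (run_trans h₁ hd)
      simp only [List.length_cons] at this
      omega
  obtain ⟨P, hw, hP⟩ := run_consumes h₁
  exact ⟨P, δ, by simp [hw], hδ, t₁ + k, s, by simpa using run_trans (hP (δ ++ (δ ++ v₂))) hk⟩

lemma exists_pump_decomposition [Fintype α] [Fintype Γ] [Fintype σ] {q₀ qf : σ} {Z₀ : Γ}
    {sf : List Γ} {w : List α} {T N : ℕ}
    (hrun : M.run T (q₀, w, [Z₀]) = some (qf, [], sf)) (hN : N ≤ w.length)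
    (hhigh : ∀ j d, M.run j (q₀, w, [Z₀]) = some d → d.2.1.length + N ≤ w.length →
      M.pumpingHeight < d.2.2.length) :
    ∃ P δ v, w = P ++ δ ++ v ∧ w.length < v.length + N ∧ (δ = [] → v = []) ∧
      ∃ n s, M.run n (q₀, P ++ δ ++ δ ++ v, [Z₀]) = some (qf, [], s) := by
  have : Nonempty (σ × List α × List Γ) := ⟨(q₀, w, [Z₀])⟩
  choose! ρ hρ using fun j (hj : j ≤ T) => exists_run_of_le hj hrun
  have hρ0 : ρ 0 = (q₀, w, [Z₀]) := run_unique (hρ 0 T.zero_le) rfl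
  have hρT : ρ T = (qf, [], sf) := run_unique (hρ T le_rfl) hrun
  have hnext : ∀ j < T, M.next (ρ j) = some (ρ (j + 1)) := fun j hj => by
    simpa [run_succ_eq_some_iff] using run_sub j.le_succ (hρ j hj.le) (hρ (j + 1) hj)
  have hexists : ∃ j, (ρ j).2.1.length + N ≤ w.length := ⟨T, by simp [hρT, hN]⟩
  obtain ⟨t, ht, htmin⟩ : ∃ t, (ρ t).2.1.length + N ≤ w.length ∧
      ∀ j < t, w.length < (ρ j).2.1.length + N :=
    ⟨Nat.find hexists, Nat.find_spec hexists, fun j hj => not_le.1 (Nat.find_min hexists hj)⟩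
  have htT : t ≤ T := not_lt.1 fun hTt =>
    (by simpa [hρT] using htmin T hTt : w.length < N).not_ge hN
  have hhigh' : ∀ j, t ≤ j → j ≤ T → M.pumpingHeight < (ρ j).2.2.length := by
    intro j htj hjT
    have := input_length_le_of_run (run_sub htj (hρ t (htj.trans hjT)) (hρ j hjT))
    exact hhigh j _ (hρ j hjT) (by omega)
  obtain ⟨t₁, t₂, ht₁₂, ht₂, hcol, hlow⟩ := exists_lowPoint_pair (fun j => (ρ j).2.2.length)
    (fun j => ((ρ j).1, (ρ j).2.2.head?))
    (fun j hj => (next_stack_length_le (hnext j hj)).trans' (Nat.le_succ _))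
    (by simp [hρ0]) hhigh' htT
  rcases hr₁ : ρ t₁ with ⟨q, v₁, s₁⟩
  rcases hr₂ : ρ t₂ with ⟨q₂, v₂, s₂⟩
  simp only [hr₁, hr₂, Prod.mk.injEq] at hcol hlow
  obtain ⟨rfl, hhead⟩ := hcol
  obtain ⟨P, δ, hw, hδ, hpump⟩ := pump_of_lowPoints hrun (hr₁ ▸ hρ t₁ (by omega))
    (hr₂ ▸ hρ t₂ (by omega)) hhead ht₁₂ (by omega)
    fun j d hj hjT hd => run_unique (hρ j hjT) hd ▸ hlow j hj hjT
  exact ⟨P, δ, v₂, hw, by simpa [hr₂] using htmin t₂ ht₂, hδ, hpump⟩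

lemma eq_of_run_eq {P P' : List α} {n n' : ℕ} {q : σ} {s : List Γ}
    (hsep : SeparatesPrefixes M.accepts)
    (h : M.run n (M.start, P, [M.startSym]) = some (q, [], s))
    (h' : M.run n' (M.start, P', [M.startSym]) = some (q, [], s)) : P = P' :=
  hsep P P' fun u hu => by rw [mem_accepts_append_iff h hu, mem_accepts_append_iff h' hu]

/-- A configuration determines the prefix read into it, and there are only finitely many
configurations with stack height at most `D`. -/
lemma exists_high_of_separatesPrefixes [Finite Γ] [Finite σ]
    (hsep : SeparatesPrefixes M.accepts) (D : ℕ) :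
    ∃ L, ∀ w j d, M.run j (M.start, w, [M.startSym]) = some d →
      d.2.1.length + L ≤ w.length → D < d.2.2.length := by
  set low := {P | ∃ n q s, M.run n (M.start, P, [M.startSym]) = some (q, [], s) ∧ s.length ≤ D}
  set readInto := fun p : σ × List Γ =>
    {P | ∃ n, M.run n (M.start, P, [M.startSym]) = some (p.1, [], p.2)}
  have hfin : low.Finite := by
    refine ((Set.finite_univ.prod (List.finite_length_le Γ D)).biUnion fun p _ =>
      Set.Subsingleton.finite (s := readInto p)
        fun P ⟨n, hn⟩ P' ⟨n', hn'⟩ => eq_of_run_eq hsep hn hn').subset ?_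
    rintro P ⟨n, q, s, hn, hs⟩
    exact Set.mem_biUnion (x := (q, s)) ⟨trivial, hs⟩ ⟨n, hn⟩
  obtain ⟨L, hL⟩ := (hfin.image List.length).bddAbove
  refine ⟨L + 1, fun w j ⟨q, v, s⟩ h hv => not_le.1 fun hs => ?_⟩
  obtain ⟨P, rfl, hP⟩ := run_consumes h
  have := hL ⟨P, ⟨j, q, s, by simpa using hP [], hs⟩, rfl⟩
  simp only [List.length_append] at hv
  omega

end DPDA

/-- The language of even-length palindromes over {a,b} is not accepted by any
deterministic pushdown automaton, i.e. it is not deterministic context-free. -/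
theorem palindromes_not_deterministic_contextFree :
    ¬ ∃ (Γ σ : Type) (_ : Fintype Γ) (_ : Fintype σ) (M : DPDA ABLetter Γ σ),
      M.accepts = {u : List ABLetter | ∃ w : List ABLetter, u = w ++ w.reverse} := by
  rintro ⟨Γ, σ, _, _, M, hM⟩
  change M.accepts = evenPalindromes ABLetter at hM
  have hab : ABLetter.a ≠ ABLetter.b := nofun
  obtain ⟨L, hL⟩ := DPDA.exists_high_of_separatesPrefixes
    (hM ▸ evenPalindromes.separatesPrefixes hab) M.pumpingHeight
  set w := List.replicate L ABLetter.a ++ ABLetter.b :: ABLetter.b :: List.replicate L ABLetter.a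
  have hw : w ∈ M.accepts := hM ▸ ⟨List.replicate L ABLetter.a ++ [ABLetter.b], by simp [w]⟩
  obtain ⟨T, qf, sf, hrun, hqf⟩ := DPDA.mem_accepts_iff_acceptsFrom.1 hw
  obtain ⟨P, δ, v, hPδv, hv, hδ, n, s, hpump⟩ :=
    DPDA.exists_pump_decomposition hrun (by simp [w]) (hL w)
  have hlen := congrArg List.length hPδv
  simp only [w, List.length_append, List.length_replicate, List.length_cons] at hlen hv
  refine evenPalindromes.pump_not_mem hab hPδv (by simp; omega)
    (fun hδ₀ => by simp [hδ hδ₀] at hv) ?_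
  exact hM ▸ DPDA.mem_accepts_iff_acceptsFrom.2 ⟨n, qf, s, hpump, hqf⟩
end
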